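/- In the quotient path algebra Γ of the doubled A_N quiver with relations x₁x₁* = 0, x_{N-1}*x_{N-1} = 0, and xᵢ*xᵢ = x_{i+1}x_{i+1}*, any loop at vertex i of length strictly greater than 2·min(i−1, N−i) is zero. -/

import Mathlib

/-! Path algebra of the doubled `A_N` quiver, modulo the Brauer-line relations
`x₁x₁* = 0`, `x_{N-1}*x_{N-1} = 0`, `xᵢ*xᵢ = x_{i+1}x_{i+1}*`.
A path from vertex `i` is encoded by its list of steps (`true` = `x` going up,
`false` = `x*` going down, concatenation-of-paths convention). -/

/-- All vertices visited by the step list `L` starting at `i` lie in `{1, …, N}`. -/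
def okSteps (N : ℕ) : ℤ → List Bool → Prop
  | i, [] => 1 ≤ i ∧ i ≤ (N : ℤ)
  | i, b :: L => 1 ≤ i ∧ i ≤ (N : ℤ) ∧ okSteps N (if b then i + 1 else i - 1) L

/-- The endpoint of the step list `L` starting at `i`. -/
def targetV : ℤ → List Bool → ℤ
  | i, [] => i
  | i, b :: L => targetV (if b then i + 1 else i - 1) L

/-- `L` encodes a path in the doubled `A_N` quiver from `i` to `j` of length `k`. -/
def IsPathFrom (N : ℕ) (i j : ℤ) (k : ℕ) (L : List Bool) : Prop :=
  okSteps N i L ∧ targetV i L = j ∧ L.length = k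

/-- The set of paths from `i` to `j` of length `k`, a basis of `e_i (FQ)_k e_j`. -/
def PathIdx (N : ℕ) (i j : ℤ) (k : ℕ) : Type :=
  {L : List Bool // IsPathFrom N i j k L}

/-- The relators spanning the degree-`k`, `(i,j)`-component of the ideal
`⟨x₁x₁*, x_{N-1}*x_{N-1}, xᵢ*xᵢ - x_{i+1}x_{i+1}*⟩` inside `e_i (FQ)_k e_j`:
a path containing `x₁x₁*` (up-down at vertex `1`) or `x_{N-1}*x_{N-1}` (down-up at
vertex `N`) is a relator, and so is the difference of two paths related by swapping a
down-up at an interior vertex into the corresponding up-down. -/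
def relators (F : Type*) [Field F] (N : ℕ) (i j : ℤ) (k : ℕ) :
    Set (PathIdx N i j k →₀ F) :=
  {v | ∃ A B : List Bool,
    (∃ h : IsPathFrom N i j k (A ++ [true, false] ++ B),
      targetV i A = 1 ∧ v = Finsupp.single ⟨A ++ [true, false] ++ B, h⟩ 1) ∨
    (∃ h : IsPathFrom N i j k (A ++ [false, true] ++ B),
      targetV i A = (N : ℤ) ∧ v = Finsupp.single ⟨A ++ [false, true] ++ B, h⟩ 1) ∨
    (∃ (h1 : IsPathFrom N i j k (A ++ [false, true] ++ B))
        (h2 : IsPathFrom N i j k (A ++ [true, false] ++ B)),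
      2 ≤ targetV i A ∧ targetV i A ≤ (N : ℤ) - 1 ∧
      v = Finsupp.single ⟨A ++ [false, true] ++ B, h1⟩ 1
          - Finsupp.single ⟨A ++ [true, false] ++ B, h2⟩ 1)}

/-- The component `e_i Γ_k e_j` of the quotient path algebra `Γ = FQ/⟨I⟩`. -/
def PathComp (F : Type*) [Field F] (N : ℕ) (i j : ℤ) (k : ℕ) :=
  (PathIdx N i j k →₀ F) ⧸ Submodule.span F (relators F N i j k)

noncomputable instance (F : Type*) [Field F] (N : ℕ) (i j : ℤ) (k : ℕ) :
    AddCommGroup (PathComp F N i j k) :=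
  Submodule.Quotient.addCommGroup _

noncomputable instance (F : Type*) [Field F] (N : ℕ) (i j : ℤ) (k : ℕ) :
    Module F (PathComp F N i j k) :=
  Submodule.Quotient.module _

/-- The class of a path in `e_i Γ_k e_j`. -/
noncomputable def pathClass (F : Type*) [Field F] {N : ℕ} {i j : ℤ} {k : ℕ} (p : PathIdx N i j k) :
    PathComp F N i j k :=
  Submodule.Quotient.mk (Finsupp.single p 1)

/-! Near vertex `1` a path can be bubble-sorted: an up-step followed by a down-step at an
interior vertex may be replaced by a down-step followed by an up-step, and at vertex `1` such a
pair is zero. Each replacement lowers the number of (up, down) inversions, so every path is zero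
or equal to one that first goes down `a` steps and then up `b` steps. For a loop `a = b`, and
going down `a` steps from `i` forces `k = 2a ≤ 2(i - 1)`. Near vertex `N` the mirror argument
sorts the other way. -/

lemma targetV_append (i : ℤ) (A B : List Bool) :
    targetV i (A ++ B) = targetV (targetV i A) B := by
  induction A generalizing i with
  | nil => rfl
  | cons b A ih => exact ih _

lemma targetV_replicate (b : Bool) (a : ℕ) (i : ℤ) :
    targetV i (List.replicate a b) = if b then i + a else i - a := by
  induction a generalizing i with
  | zero => cases b <;> simp [targetV]
  | succ a ih =>
    rw [List.replicate_succ, targetV, ih]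
    cases b <;> simp only [if_true, Bool.false_eq_true, if_false] <;> push_cast <;> ring

lemma okSteps_start {N : ℕ} {i : ℤ} {L : List Bool} (h : okSteps N i L) :
    1 ≤ i ∧ i ≤ (N : ℤ) := by
  cases L with
  | nil => exact h
  | cons b L => exact ⟨h.1, h.2.1⟩

lemma okSteps_append {N : ℕ} {i : ℤ} {A B : List Bool} :
    okSteps N i (A ++ B) ↔ okSteps N i A ∧ okSteps N (targetV i A) B := by
  induction A generalizing i with
  | nil => exact ⟨fun h => ⟨okSteps_start h, h⟩, And.right⟩
  | cons b A ih =>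
    simp only [List.cons_append, okSteps, targetV, ih]
    tauto

lemma okSteps_replicate_append {N : ℕ} (b : Bool) (a : ℕ) {i : ℤ} {M : List Bool}
    (h : okSteps N i (List.replicate a b ++ M)) :
    if b then i + a ≤ N else 1 ≤ i - a := by
  have hend := okSteps_start (okSteps_append.mp h).2
  rw [targetV_replicate] at hend
  cases b <;> simp only [if_true, Bool.false_eq_true, if_false] at hend ⊢ <;> omega

lemma okSteps_turn {N : ℕ} {i : ℤ} {A B : List Bool} {b : Bool} :
    okSteps N i (A ++ [b, !b] ++ B) ↔
      okSteps N i A ∧ okSteps N (targetV i A) B ∧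
        1 ≤ (if b then targetV i A + 1 else targetV i A - 1) ∧
        (if b then targetV i A + 1 else targetV i A - 1) ≤ N := by
  rw [List.append_assoc, okSteps_append]
  cases b <;> simp [okSteps, add_sub_cancel_right, sub_add_cancel] <;> grind [okSteps_start]

lemma targetV_turn (i : ℤ) (A B : List Bool) (b : Bool) :
    targetV i (A ++ [b, !b] ++ B) = targetV (targetV i A) B := by
  rw [List.append_assoc, targetV_append]
  cases b <;> simp [targetV]

lemma IsPathFrom.turn {N : ℕ} {i j : ℤ} {k : ℕ} {A B : List Bool} {b : Bool}
    (h : IsPathFrom N i j k (A ++ [b, !b] ++ B))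
    (hlo : 1 ≤ (if b then targetV i A - 1 else targetV i A + 1))
    (hhi : (if b then targetV i A - 1 else targetV i A + 1) ≤ N) :
    IsPathFrom N i j k (A ++ [!b, b] ++ B) := by
  obtain ⟨hok, htarget, hlen⟩ := h
  obtain ⟨hA, hB, -⟩ := okSteps_turn.mp hok
  rw [targetV_turn] at htarget
  cases b
  · exact ⟨okSteps_turn (b := true) |>.mpr ⟨hA, hB, hlo, hhi⟩,
      (targetV_turn i A B true).trans htarget, by simpa using hlen⟩
  · exact ⟨okSteps_turn (b := false) |>.mpr ⟨hA, hB, hlo, hhi⟩,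
      (targetV_turn i A B false).trans htarget, by simpa using hlen⟩

def inversions (d : Bool) : List Bool → ℕ
  | [] => 0
  | b :: L => (if b = d then L.count (!d) else 0) + inversions d L

lemma inversions_turn (d : Bool) (A B : List Bool) :
    inversions d (A ++ [d, !d] ++ B) = inversions d (A ++ [!d, d] ++ B) + 1 := by
  induction A with
  | nil => cases d <;> simp [inversions] <;> ring
  | cons b A ih =>
    simp only [List.cons_append, inversions] at ih ⊢
    rw [ih]
    cases b <;> cases d <;> simp [List.count_append] <;> ring

lemma eq_replicate_append_replicate_or_exists_turn (d : Bool) (L : List Bool) :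
    (∃ a b, L = List.replicate a (!d) ++ List.replicate b d) ∨
      ∃ A B, L = A ++ [d, !d] ++ B := by
  induction L with
  | nil => exact Or.inl ⟨0, 0, rfl⟩
  | cons c L ih =>
    obtain ⟨a, b, rfl⟩ | ⟨A, B, rfl⟩ := ih
    · by_cases hc : c = d
      · subst hc
        cases a with
        | zero => exact Or.inl ⟨0, b + 1, by simp [List.replicate_succ]⟩
        | succ a =>
          exact Or.inr ⟨[], List.replicate a (!c) ++ List.replicate b c,
            by simp [List.replicate_succ]⟩
      · exact Or.inl ⟨a + 1, b, by simp [List.replicate_succ, Bool.eq_not.mpr hc]⟩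
    · exact Or.inr ⟨c :: A, B, rfl⟩

section Quotient

variable (F : Type*) [Field F] {N : ℕ} {i j : ℤ} {k : ℕ}

lemma pathClass_eq_zero_of_mem_relators {p : PathIdx N i j k}
    (hp : Finsupp.single p 1 ∈ relators F N i j k) : pathClass F p = 0 :=
  (Submodule.Quotient.mk_eq_zero _).mpr (Submodule.subset_span hp)

lemma pathClass_eq_of_sub_mem_relators {p q : PathIdx N i j k}
    (hpq : Finsupp.single p 1 - Finsupp.single q 1 ∈ relators F N i j k) :
    pathClass F p = pathClass F q :=
  (Submodule.Quotient.eq _).mpr (Submodule.subset_span hpq)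

lemma pathClass_turn (d : Bool) {A B : List Bool} (h : IsPathFrom N i j k (A ++ [d, !d] ++ B)) :
    pathClass F ⟨_, h⟩ = 0 ∨
      ∃ h' : IsPathFrom N i j k (A ++ [!d, d] ++ B), pathClass F ⟨_, h⟩ = pathClass F ⟨_, h'⟩ := by
  obtain ⟨-, hB, hlo, hhi⟩ := okSteps_turn.mp h.1
  have hv := okSteps_start hB
  cases d
  · simp only [Bool.false_eq_true, if_false] at hlo hhi
    by_cases hvN : targetV i A = N
    · exact Or.inl (pathClass_eq_zero_of_mem_relators F ⟨A, B, Or.inr (Or.inl ⟨h, hvN, rfl⟩)⟩)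
    · have h' := h.turn (by simp; omega) (by simp; omega)
      exact Or.inr ⟨h', pathClass_eq_of_sub_mem_relators F
        ⟨A, B, Or.inr (Or.inr ⟨h, h', by omega, by omega, rfl⟩)⟩⟩
  · simp only [if_true] at hlo hhi
    by_cases hv1 : targetV i A = 1
    · exact Or.inl (pathClass_eq_zero_of_mem_relators F ⟨A, B, Or.inl ⟨h, hv1, rfl⟩⟩)
    · have h' := h.turn (by simp; omega) (by simp; omega)
      exact Or.inr ⟨h', (pathClass_eq_of_sub_mem_relators F
        ⟨A, B, Or.inr (Or.inr ⟨h', h, by omega, by omega, rfl⟩)⟩).symm⟩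

theorem pathClass_eq_zero_or_eq_sorted (d : Bool) (L : List Bool) (h : IsPathFrom N i j k L) :
    pathClass F ⟨L, h⟩ = 0 ∨
      ∃ (a b : ℕ) (h' : IsPathFrom N i j k (List.replicate a (!d) ++ List.replicate b d)),
        pathClass F ⟨L, h⟩ = pathClass F ⟨_, h'⟩ := by
  induction hn : inversions d L using Nat.strong_induction_on generalizing L with
  | _ n ih =>
    obtain ⟨a, b, rfl⟩ | ⟨A, B, rfl⟩ := eq_replicate_append_replicate_or_exists_turn d L
    · exact Or.inr ⟨a, b, h, rfl⟩
    obtain hzero | ⟨h', hturn⟩ := pathClass_turn F d h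
    · exact Or.inl hzero
    rw [hturn]
    exact ih _ (by rw [← hn, inversions_turn]; omega) _ h' rfl

lemma IsPathFrom.length_le_of_loop_sorted {d : Bool} {a b : ℕ}
    (h : IsPathFrom N i i k (List.replicate a (!d) ++ List.replicate b d)) :
    (k : ℤ) ≤ 2 * (if d then i - 1 else N - i) := by
  obtain ⟨hok, htarget, hlen⟩ := h
  have hfar := okSteps_replicate_append (!d) a hok
  rw [targetV_append, targetV_replicate, targetV_replicate] at htarget
  simp only [List.length_append, List.length_replicate] at hlen
  cases d <;> simp only [Bool.not_false, Bool.not_true, if_true, Bool.false_eq_true, if_false]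
    at hfar htarget ⊢ <;> omega

theorem pathClass_loop_eq_zero (d : Bool) (hk : 2 * (if d then i - 1 else N - i) < (k : ℤ))
    (p : PathIdx N i i k) : pathClass F p = 0 := by
  obtain ⟨L, h⟩ := p
  obtain hzero | ⟨a, b, h', -⟩ := pathClass_eq_zero_or_eq_sorted F d L h
  · exact hzero
  · exact absurd h'.length_le_of_loop_sorted (not_le.mpr hk)

end Quotient

theorem stmt8_general (F : Type*) [Field F] (N : ℕ) (i : ℤ) (k : ℕ)
    (hk : 2 * min (i - 1) ((N : ℤ) - i) < (k : ℤ))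
    (p : PathIdx N i i k) :
    pathClass F p = 0 := by
  rcases le_total (i - 1) ((N : ℤ) - i) with hmin | hmin
  · exact pathClass_loop_eq_zero F true (by simpa [min_eq_left hmin] using hk) p
  · exact pathClass_loop_eq_zero F false (by simpa [min_eq_right hmin] using hk) p

/-- Any loop at vertex `i` of length `> 2·min(i−1, N−i)` is zero in `Γ`. -/
theorem stmt8 (F : Type*) [Field F] (N : ℕ) (hN : 1 ≤ N) (i : ℤ)
    (hi : 1 ≤ i) (hiN : i ≤ (N : ℤ)) (k : ℕ)
    (hk : 2 * min (i - 1) ((N : ℤ) - i) < (k : ℤ))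
    (p : PathIdx N i i k) :
    pathClass F p = 0 :=
  stmt8_general F N i k hk p
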